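/- arXiv:math/0605119 — 2 statements merged into one kernel-verified Lean document; each statement's English description precedes it below -/
import Mathlib

section
/- Let n ≥ 4 and let I = (x_1,x_2) ∩ (x_3,…,x_n) be the squarefree monomial ideal in S = K[x_1,…,x_n]. Then I is not pretty clean; in particular, for n = 4 the ideal (x_1x_3, x_1x_4, x_2x_3, x_2x_4) ⊂ K[x_1,x_2,x_3,x_4] is not pretty clean, and hence not clean. -/
open MvPolynomial

/-- The monomial `x^a` in `K[x_i : i ∈ σ]`. -/
noncomputable def mono (K : Type*) [Field K] {σ : Type*} (a : σ →₀ ℕ) :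
    MvPolynomial σ K :=
  MvPolynomial.monomial a 1

/-- An ideal is a monomial ideal if it is generated by monomials. -/
def IsMonomialIdeal {K : Type*} [Field K] {σ : Type*}
    (I : Ideal (MvPolynomial σ K)) : Prop :=
  ∃ A : Set (σ →₀ ℕ), I = Ideal.span ((fun a => mono K a) '' A)

/-- `IsPrimeFiltration I c u` says that `c` is a chain of (monomial) ideals
`I = I₀ ⊆ I₁ ⊆ ⋯ ⊆ I_r = S` with `I_j = I_{j-1} + (x^{u j})` and
`I_{j-1} : x^{u j}` a prime ideal, i.e. `I_j/I_{j-1} ≅ S/P_j`. -/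
def IsPrimeFiltration {K : Type*} [Field K] {σ : Type*}
    (I : Ideal (MvPolynomial σ K)) {r : ℕ}
    (c : Fin (r + 1) → Ideal (MvPolynomial σ K)) (u : Fin r → (σ →₀ ℕ)) : Prop :=
  c 0 = I ∧ c (Fin.last r) = ⊤ ∧
    (∀ j : Fin r, c j.succ = c j.castSucc ⊔ Ideal.span {mono K (u j)}) ∧
    (∀ j : Fin r, ((c j.castSucc).colon (Ideal.span {mono K (u j)})).IsPrime)

/-- The `j`-th prime factor `P_j = I_{j-1} : u_j` of a prime filtration. -/
noncomputable def filtFactor {K : Type*} [Field K] {σ : Type*} {r : ℕ}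
    (c : Fin (r + 1) → Ideal (MvPolynomial σ K)) (u : Fin r → (σ →₀ ℕ)) (j : Fin r) :
    Ideal (MvPolynomial σ K) :=
  (c j.castSucc).colon (Ideal.span {mono K (u j)})

/-- A prime filtration is pretty clean if `i < j` and `P_i ⊆ P_j` imply `P_i = P_j`. -/
def IsPrettyCleanFiltration {K : Type*} [Field K] {σ : Type*}
    (I : Ideal (MvPolynomial σ K)) {r : ℕ}
    (c : Fin (r + 1) → Ideal (MvPolynomial σ K)) (u : Fin r → (σ →₀ ℕ)) : Prop :=
  IsPrimeFiltration I c u ∧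
    ∀ i j : Fin r, i < j → filtFactor c u i ≤ filtFactor c u j →
      filtFactor c u i = filtFactor c u j

/-- A monomial ideal is pretty clean if it admits a pretty clean filtration. -/
def IsPrettyClean {K : Type*} [Field K] {σ : Type*}
    (I : Ideal (MvPolynomial σ K)) : Prop :=
  ∃ (r : ℕ) (c : Fin (r + 1) → Ideal (MvPolynomial σ K)) (u : Fin r → (σ →₀ ℕ)),
    IsPrettyCleanFiltration I c u

/-- A prime filtration is clean if its support is the set of minimal primes of `I`. -/
def IsCleanFiltration {K : Type*} [Field K] {σ : Type*}
    (I : Ideal (MvPolynomial σ K)) {r : ℕ}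
    (c : Fin (r + 1) → Ideal (MvPolynomial σ K)) (u : Fin r → (σ →₀ ℕ)) : Prop :=
  IsPrimeFiltration I c u ∧
    {P | ∃ j : Fin r, filtFactor c u j = P} = I.minimalPrimes

/-- A monomial ideal is clean if it admits a clean filtration. -/
def IsClean {K : Type*} [Field K] {σ : Type*}
    (I : Ideal (MvPolynomial σ K)) : Prop :=
  ∃ (r : ℕ) (c : Fin (r + 1) → Ideal (MvPolynomial σ K)) (u : Fin r → (σ →₀ ℕ)),
    IsCleanFiltration I c u

/-!
Every factor `P_j` of a pretty clean filtration of `S/I` has the form `I : y`: take the first `i`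
with `P_i ⊆ P_j`; pretty cleanness gives `P_i = P_j`, and multiplying by elements of the earlier
factors that lie outside `P_j` collapses the first `i` steps of the filtration onto `I`.
For `I = P ∩ Q` with `P = (x_v : v ∈ V)` and `Q = (x_w : w ∈ W)` this leaves `P_j ∈ {P, Q}`.
If the step at which `1` enters had factor `Q`, every `x_w` with `w ∈ W` would have to enter
with generator `x_w` and factor `P`, so for `w₁ ≠ w₂` in `W` the monomial `x_{w₁} x_{w₂}` would
enter at two different steps. By symmetry that step can have neither factor.
-/

section Chain

variable {R : Type*} [CommRing R] {r : ℕ} {c : Fin (r + 1) → Ideal R}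

def EntersAt (c : Fin (r + 1) → Ideal R) (f : R) (j : Fin r) : Prop :=
  f ∉ c j.castSucc ∧ f ∈ c j.succ

theorem exists_entersAt {f : R} (h0 : f ∉ c 0) (hr : f ∈ c (Fin.last r)) :
    ∃ j, EntersAt c f j := by
  by_contra! h
  have hnot : ∀ i, f ∉ c i := by
    intro i
    induction i using Fin.induction with
    | zero => exact h0
    | succ j ih => exact fun hs => h j ⟨ih, hs⟩
  exact hnot _ hr

theorem EntersAt.unique (hc : Monotone c) {f : R} {j k : Fin r} (hj : EntersAt c f j)
    (hk : EntersAt c f k) : j = k := by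
  by_contra hne
  rcases lt_or_gt_of_ne hne with h | h
  · exact hk.1 (hc (Fin.succ_le_castSucc_iff.2 h) hj.2)
  · exact hj.1 (hc (Fin.succ_le_castSucc_iff.2 h) hk.2)

variable {g : Fin r → R} {P : Fin r → Ideal R}

theorem monotone_of_eq_sup_span (hstep : ∀ j, c j.succ = c j.castSucc ⊔ Ideal.span {g j}) :
    Monotone c :=
  Fin.monotone_iff_le_succ.2 fun j => (hstep j).ge.trans' le_sup_left

theorem entersAt_mul_of_notMem_colon (hstep : ∀ j, c j.succ = c j.castSucc ⊔ Ideal.span {g j})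
    {j : Fin r} {h : R} (hh : h ∉ (c j.castSucc).colon (Ideal.span {g j})) :
    EntersAt c (h * g j) j := by
  refine ⟨fun hm => hh (Ideal.mem_colon_span_singleton.2 hm), ?_⟩
  rw [hstep]
  exact Ideal.mem_sup_right (Ideal.mul_mem_left _ _ (Ideal.mem_span_singleton_self _))

theorem exists_le_colon_of_forall_not_le
    (hstep : ∀ j, c j.succ = c j.castSucc ⊔ Ideal.span {g j})
    (hP : ∀ j, P j = (c j.castSucc).colon (Ideal.span {g j})) {Q : Ideal R} (hQ : Q.IsPrime)
    (j : Fin (r + 1)) (hj : ∀ i : Fin r, i.castSucc < j → ¬ P i ≤ Q) :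
    ∃ z ∉ Q, c j ≤ (c 0).colon (Ideal.span {z}) := by
  induction j using Fin.induction with
  | zero => exact ⟨1, hQ.one_notMem, fun a ha => by simpa using ha⟩
  | succ j ih =>
    obtain ⟨z, hzQ, hz⟩ := ih fun i hi => hj i (hi.trans Fin.castSucc_lt_succ)
    obtain ⟨t, ht, htQ⟩ := SetLike.not_le_iff_exists.1 (hj j Fin.castSucc_lt_succ)
    rw [hP, Ideal.mem_colon_span_singleton] at ht
    refine ⟨t * z, fun h => ?_, ?_⟩
    · exact (hQ.mem_or_mem h).elim htQ hzQ
    · rw [hstep, sup_le_iff, Ideal.span_singleton_le_iff_mem]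
      refine ⟨fun a ha => ?_, ?_⟩
      · rw [Ideal.mem_colon_span_singleton]
        convert (c 0).mul_mem_left t (Ideal.mem_colon_span_singleton.1 (hz ha)) using 1
        ring
      · rw [Ideal.mem_colon_span_singleton]
        convert Ideal.mem_colon_span_singleton.1 (hz ht) using 1
        ring

theorem exists_eq_colon_of_prettyClean (hstep : ∀ j, c j.succ = c j.castSucc ⊔ Ideal.span {g j})
    (hP : ∀ j, P j = (c j.castSucc).colon (Ideal.span {g j})) (hprime : ∀ j, (P j).IsPrime)
    (hpc : ∀ i j, i < j → P i ≤ P j → P i = P j) (j : Fin r) :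
    ∃ y : R, P j = (c 0).colon (Ideal.span {y}) := by
  induction j using WellFoundedLT.induction with
  | _ j ih =>
  by_cases h : ∃ i < j, P i ≤ P j
  · obtain ⟨i, hij, hle⟩ := h
    rw [← hpc i j hij hle]
    exact ih i hij
  · push Not at h
    obtain ⟨z, hzP, hz⟩ := exists_le_colon_of_forall_not_le hstep hP (hprime j) j.castSucc
      fun i hi => h i (Fin.castSucc_lt_castSucc_iff.1 hi)
    refine ⟨z * g j, le_antisymm (fun a ha => ?_) (fun a ha => ?_)⟩
    · rw [hP, Ideal.mem_colon_span_singleton] at ha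
      rw [Ideal.mem_colon_span_singleton]
      convert Ideal.mem_colon_span_singleton.1 (hz ha) using 1
      ring
    · rw [Ideal.mem_colon_span_singleton, ← mul_assoc] at ha
      have hmem : a * z ∈ P j := by
        rw [hP, Ideal.mem_colon_span_singleton]
        exact monotone_of_eq_sup_span hstep (Fin.zero_le _) ha
      exact ((hprime j).mem_or_mem hmem).resolve_right hzP

theorem injective_of_isPrime (hstep : ∀ j, c j.succ = c j.castSucc ⊔ Ideal.span {g j})
    (hprime : ∀ j, ((c j.castSucc).colon (Ideal.span {g j})).IsPrime) : Function.Injective g := by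
  intro j k hjk
  have hj := entersAt_mul_of_notMem_colon hstep (hprime j).one_notMem
  have hk := entersAt_mul_of_notMem_colon hstep (hprime k).one_notMem
  rw [← hjk] at hk
  exact hj.unique (monotone_of_eq_sup_span hstep) hk

theorem Ideal.IsPrime.colon_span_singleton_of_notMem {Q : Ideal R} (hQ : Q.IsPrime) {y : R}
    (hy : y ∉ Q) : Q.colon (Ideal.span {y}) = Q :=
  le_antisymm
    (fun _ ha => (hQ.mem_or_mem (Ideal.mem_colon_span_singleton.1 ha)).resolve_right hy)
    Ideal.le_colon

theorem eq_or_eq_of_colon_inf_isPrime {Q₁ Q₂ : Ideal R} (h₁ : Q₁.IsPrime) (h₂ : Q₂.IsPrime)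
    {y : R} (hy : ((Q₁ ⊓ Q₂).colon (Ideal.span {y})).IsPrime) :
    (Q₁ ⊓ Q₂).colon (Ideal.span {y}) = Q₁ ∨ (Q₁ ⊓ Q₂).colon (Ideal.span {y}) = Q₂ := by
  have htop : ∀ Q : Ideal R, y ∈ Q → Q.colon (Ideal.span {y}) = ⊤ := fun Q hyQ =>
    (Submodule.colon_eq_top_iff_subset _).2 (by simpa [Ideal.span_le] using hyQ)
  rw [Submodule.inf_colon] at hy ⊢
  by_cases hy₁ : y ∈ Q₁
  · by_cases hy₂ : y ∈ Q₂
    · rw [htop _ hy₁, htop _ hy₂, top_inf_eq] at hy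
      exact absurd rfl hy.ne_top
    · rw [htop _ hy₁, h₂.colon_span_singleton_of_notMem hy₂, top_inf_eq]
      exact Or.inr rfl
  · rw [h₁.colon_span_singleton_of_notMem hy₁] at hy ⊢
    by_cases hy₂ : y ∈ Q₂
    · rw [htop _ hy₂, inf_top_eq]
      exact Or.inl rfl
    · rw [h₂.colon_span_singleton_of_notMem hy₂] at hy ⊢
      rcases hy.inf_le.1 le_rfl with h | h
      · exact Or.inl (inf_le_left.antisymm h)
      · exact Or.inr (inf_le_right.antisymm h)

end Chain

section Monomial

variable {σ : Type*}

theorem isPrime_span_X_image {R : Type*} [CommRing R] [IsDomain R] (V : Set σ) :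
    (Ideal.span (X '' V) : Ideal (MvPolynomial σ R)).IsPrime := by
  set φ : MvPolynomial σ R →ₐ[R] MvPolynomial σ R := aeval (Vᶜ.indicator X)
  have hsub : ∀ p, p - φ p ∈ Ideal.span (X '' V) := by
    intro p
    induction p using MvPolynomial.induction_on with
    | C a => simp
    | add p q hp hq =>
      convert add_mem hp hq using 1
      rw [map_add]; ring
    | mul_X p i hp =>
      have hi : X i - φ (X i) ∈ Ideal.span (X '' V) := by
        by_cases h : i ∈ V
        · simpa [φ, h] using Ideal.subset_span (Set.mem_image_of_mem X h)
        · simp [φ, h]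
      convert add_mem (Ideal.mul_mem_right (X i) _ hp) (Ideal.mul_mem_left _ (φ p) hi) using 1
      rw [map_mul]; ring
  have hker : RingHom.ker φ = Ideal.span (X '' V) := by
    refine le_antisymm (fun p hp => by simpa [RingHom.mem_ker.1 hp] using hsub p) ?_
    rw [Ideal.span_le]
    rintro _ ⟨v, hv, rfl⟩
    simp [φ, hv]
  exact hker ▸ RingHom.ker_isPrime φ

theorem X_mem_span_X_image_iff {R : Type*} [CommSemiring R] [Nontrivial R] {i : σ}
    {V : Set σ} : (X i : MvPolynomial σ R) ∈ Ideal.span (X '' V) ↔ i ∈ V := by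
  simp [mem_ideal_span_X_image, support_X, Finsupp.single_apply_ne_zero]

theorem Finsupp.single_add_single_le_iff {v w : σ} (hvw : v ≠ w) {m : σ →₀ ℕ} :
    Finsupp.single v 1 + Finsupp.single w 1 ≤ m ↔ m v ≠ 0 ∧ m w ≠ 0 := by
  refine ⟨fun h => ⟨?_, ?_⟩, fun ⟨hv, hw⟩ i => ?_⟩
  · exact Nat.one_le_iff_ne_zero.1 (by simpa [hvw] using h v)
  · exact Nat.one_le_iff_ne_zero.1 (by simpa [hvw.symm] using h w)
  · by_cases hiv : i = v <;> by_cases hiw : i = w <;> simp_all <;> omega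

theorem Finsupp.eq_zero_or_eq_of_le_single {w : σ} {m : σ →₀ ℕ} (h : m ≤ Finsupp.single w 1) :
    m = 0 ∨ m = Finsupp.single w 1 := by
  have hm : m = Finsupp.single w (m w) := by
    ext i
    by_cases hi : i = w
    · simp [hi]
    · simpa [hi, Ne.symm hi] using h i
  rcases Nat.le_one_iff_eq_zero_or_eq_one.1 (by simpa using h w) with h0 | h1
  · exact Or.inl (hm.trans (by rw [h0, Finsupp.single_zero]))
  · exact Or.inr (hm.trans (by rw [h1]))

variable {K : Type*} [Field K]

theorem mono_single_one (i : σ) : mono K (Finsupp.single i 1) = X i :=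
  rfl

theorem mono_mem_span_mono_image {A : Set (σ →₀ ℕ)} {a : σ →₀ ℕ} :
    mono K a ∈ Ideal.span ((fun s => mono K s) '' A) ↔ ∃ s ∈ A, s ≤ a := by
  classical
  simp [mono, mem_ideal_span_monomial_image, support_monomial]

theorem image2_X_mul_X (V W : Set σ) :
    Set.image2 (fun v w => (X v * X w : MvPolynomial σ K)) V W =
      (fun s => mono K s) ''
        Set.image2 (fun v w => Finsupp.single v 1 + Finsupp.single w 1) V W := by
  simp [Set.image_image2, mono, X, monomial_mul]

theorem span_X_inf_span_X {V W : Set σ} (hVW : Disjoint V W) :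
    Ideal.span (X '' V) ⊓ Ideal.span (X '' W) =
      (Ideal.span (Set.image2 (fun v w => X v * X w) V W) : Ideal (MvPolynomial σ K)) := by
  ext p
  simp only [Submodule.mem_inf, mem_ideal_span_X_image, image2_X_mul_X, mono,
    mem_ideal_span_monomial_image, ← forall₂_and]
  refine forall₂_congr fun m _ => ⟨?_, ?_⟩
  · rintro ⟨⟨v, hv, hmv⟩, ⟨w, hw, hmw⟩⟩
    exact ⟨_, ⟨v, hv, w, hw, rfl⟩,
      (Finsupp.single_add_single_le_iff (hVW.ne_of_mem hv hw)).2 ⟨hmv, hmw⟩⟩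
  · rintro ⟨_, ⟨v, hv, w, hw, rfl⟩, hle⟩
    obtain ⟨hmv, hmw⟩ := (Finsupp.single_add_single_le_iff (hVW.ne_of_mem hv hw)).1 hle
    exact ⟨⟨v, hv, hmv⟩, ⟨w, hw, hmw⟩⟩

theorem isMonomialIdeal_span_X_inf_span_X {V W : Set σ} (hVW : Disjoint V W) :
    IsMonomialIdeal (Ideal.span (X '' V) ⊓ Ideal.span (X '' W) : Ideal (MvPolynomial σ K)) :=
  ⟨_, by rw [span_X_inf_span_X hVW, image2_X_mul_X]⟩

theorem IsMonomialIdeal.sup_span_mono {J : Ideal (MvPolynomial σ K)} (hJ : IsMonomialIdeal J)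
    (u : σ →₀ ℕ) : IsMonomialIdeal (J ⊔ Ideal.span {mono K u}) := by
  obtain ⟨A, rfl⟩ := hJ
  exact ⟨insert u A, by rw [Set.image_insert_eq, Ideal.span_insert, sup_comm]⟩

theorem IsMonomialIdeal.le_of_mono_mem_sup {J : Ideal (MvPolynomial σ K)}
    (hJ : IsMonomialIdeal J) {a u : σ →₀ ℕ} (h : mono K a ∈ J ⊔ Ideal.span {mono K u})
    (h' : mono K a ∉ J) : u ≤ a := by
  obtain ⟨A, rfl⟩ := hJ
  rw [sup_comm, ← Ideal.span_insert, ← Set.image_insert_eq, mono_mem_span_mono_image] at h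
  obtain ⟨s, rfl | hs, hsa⟩ := h
  · exact hsa
  · exact absurd (mono_mem_span_mono_image.2 ⟨s, hs, hsa⟩) h'

end Monomial

namespace IsPrimeFiltration

variable {σ K : Type*} [Field K] {I : Ideal (MvPolynomial σ K)} {r : ℕ}
  {c : Fin (r + 1) → Ideal (MvPolynomial σ K)} {u : Fin r → (σ →₀ ℕ)}

theorem monotone (hF : IsPrimeFiltration I c u) : Monotone c :=
  monotone_of_eq_sup_span hF.2.2.1

theorem isMonomialIdeal (hF : IsPrimeFiltration I c u) (hI : IsMonomialIdeal I)
    (j : Fin (r + 1)) : IsMonomialIdeal (c j) := by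
  induction j using Fin.induction with
  | zero => exact hF.1 ▸ hI
  | succ j ih => exact hF.2.2.1 j ▸ ih.sup_span_mono (u j)

theorem le_of_entersAt (hF : IsPrimeFiltration I c u) (hI : IsMonomialIdeal I) {a : σ →₀ ℕ}
    {j : Fin r} (h : EntersAt c (mono K a) j) : u j ≤ a :=
  (hF.isMonomialIdeal hI j.castSucc).le_of_mono_mem_sup (hF.2.2.1 j ▸ h.2) h.1

variable {V W : Set σ}

theorem exists_u_eq_single_and_filtFactor_eq (hVW : Disjoint V W)
    (hF : IsPrimeFiltration (Ideal.span (X '' V) ⊓ Ideal.span (X '' W)) c u)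
    (hfac : ∀ j, filtFactor c u j = Ideal.span (X '' V) ∨ filtFactor c u j = Ideal.span (X '' W))
    (hzero : ∀ j, u j = 0 → filtFactor c u j ≠ Ideal.span (X '' V)) {v w : σ} (hv : v ∈ V)
    (hw : w ∈ W) : ∃ j, u j = Finsupp.single w 1 ∧ filtFactor c u j = Ideal.span (X '' V) := by
  have hXw : X w ∉ c 0 := by
    rw [hF.1]
    exact fun h => hVW.notMem_of_mem_right hw
      (X_mem_span_X_image_iff.1 (Submodule.mem_inf.1 h).1)
  obtain ⟨j, hj⟩ := exists_entersAt hXw (by simp [hF.2.1])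
  rcases Finsupp.eq_zero_or_eq_of_le_single (hF.le_of_entersAt
    (isMonomialIdeal_span_X_inf_span_X hVW) hj) with h0 | h1
  · have hW : filtFactor c u j = Ideal.span (X '' W) := (hfac j).resolve_left (hzero j h0)
    have hXwP : X w ∈ filtFactor c u j := hW ▸ X_mem_span_X_image_iff.2 hw
    rw [filtFactor, Ideal.mem_colon_span_singleton, h0] at hXwP
    exact absurd (by simpa [mono] using hXwP) hj.1
  · refine ⟨j, h1, (hfac j).resolve_right fun hW => hVW.notMem_of_mem_left hv ?_⟩
    have hXv : X v ∈ filtFactor c u j := by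
      rw [filtFactor, Ideal.mem_colon_span_singleton, h1]
      refine hF.monotone (Fin.zero_le _) (hF.1 ▸ ⟨?_, ?_⟩)
      · exact Ideal.mul_mem_right _ _ (Ideal.subset_span ⟨v, hv, rfl⟩)
      · exact Ideal.mul_mem_left _ _ (Ideal.subset_span ⟨w, hw, rfl⟩)
    exact X_mem_span_X_image_iff.1 (hW ▸ hXv)

theorem exists_u_eq_zero_and_filtFactor_eq (hVW : Disjoint V W)
    (hF : IsPrimeFiltration (Ideal.span (X '' V) ⊓ Ideal.span (X '' W)) c u)
    (hfac : ∀ j, filtFactor c u j = Ideal.span (X '' V) ∨ filtFactor c u j = Ideal.span (X '' W))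
    (hV : V.Nonempty) (hW : W.Nontrivial) :
    ∃ j, u j = 0 ∧ filtFactor c u j = Ideal.span (X '' V) := by
  by_contra! hzero
  obtain ⟨v, hv⟩ := hV
  obtain ⟨w₁, hw₁, w₂, hw₂, hne⟩ := hW
  obtain ⟨j₁, hu₁, hP₁⟩ := exists_u_eq_single_and_filtFactor_eq hVW hF hfac hzero hv hw₁
  obtain ⟨j₂, hu₂, hP₂⟩ := exists_u_eq_single_and_filtFactor_eq hVW hF hfac hzero hv hw₂
  have hX : ∀ {j w'}, filtFactor c u j = Ideal.span (X '' V) → w' ∈ W →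
      X w' ∉ filtFactor c u j := fun hP hw' h =>
    hVW.notMem_of_mem_right hw' (X_mem_span_X_image_iff.1 (hP ▸ h))
  have h₁ : EntersAt c (X w₂ * X w₁) j₁ := by
    simpa [hu₁, mono_single_one] using entersAt_mul_of_notMem_colon hF.2.2.1 (hX hP₁ hw₂)
  have h₂ : EntersAt c (X w₂ * X w₁) j₂ := by
    simpa [hu₂, mono_single_one, mul_comm] using
      entersAt_mul_of_notMem_colon hF.2.2.1 (hX hP₂ hw₁)
  have hj : j₁ = j₂ := h₁.unique hF.monotone h₂
  exact hne (Finsupp.single_left_injective one_ne_zero (hu₁.symm.trans (hj ▸ hu₂)))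

end IsPrimeFiltration

theorem not_isPrettyClean_span_X_inf_span_X {σ K : Type*} [Field K] {V W : Set σ}
    (hVW : Disjoint V W) (hV : V.Nontrivial) (hW : W.Nontrivial) :
    ¬ IsPrettyClean (Ideal.span (X '' V) ⊓ Ideal.span (X '' W) : Ideal (MvPolynomial σ K)) := by
  rintro ⟨r, c, u, hF : IsPrimeFiltration _ c u, hpc⟩
  have hfac : ∀ j, filtFactor c u j = Ideal.span (X '' V) ∨
      filtFactor c u j = Ideal.span (X '' W) := fun j => by
    obtain ⟨y, hy⟩ :=
      exists_eq_colon_of_prettyClean (P := filtFactor c u) hF.2.2.1 (fun _ => rfl) hF.2.2.2 hpc j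
    have hprime : (filtFactor c u j).IsPrime := hF.2.2.2 j
    rw [hy, hF.1] at hprime ⊢
    exact eq_or_eq_of_colon_inf_isPrime (isPrime_span_X_image V) (isPrime_span_X_image W) hprime
  obtain ⟨j, hj0, hjV⟩ := hF.exists_u_eq_zero_and_filtFactor_eq hVW hfac hV.nonempty hW
  have hF' : IsPrimeFiltration (Ideal.span (X '' W) ⊓ Ideal.span (X '' V)) c u := by
    rwa [inf_comm]
  obtain ⟨k, hk0, hkW⟩ :=
    hF'.exists_u_eq_zero_and_filtFactor_eq hVW.symm (fun j => (hfac j).symm) hW.nonempty hV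
  have hjk : j = k := injective_of_isPrime hF.2.2.1 hF.2.2.2 (by simp only [hj0, hk0])
  obtain ⟨v, hv⟩ := hV.nonempty
  have hXv : (X v : MvPolynomial σ K) ∈ Ideal.span (X '' W) :=
    hkW ▸ hjk ▸ hjV ▸ X_mem_span_X_image_iff.2 hv
  exact hVW.notMem_of_mem_left hv (X_mem_span_X_image_iff.1 hXv)

theorem IsClean.isPrettyClean {σ K : Type*} [Field K] {I : Ideal (MvPolynomial σ K)}
    (h : IsClean I) : IsPrettyClean I := by
  obtain ⟨r, c, u, hF, hsupp⟩ := h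
  refine ⟨r, c, u, hF, fun i j _ hle => ?_⟩
  have hi : filtFactor c u i ∈ I.minimalPrimes := hsupp ▸ ⟨i, rfl⟩
  have hj : filtFactor c u j ∈ I.minimalPrimes := hsupp ▸ ⟨j, rfl⟩
  exact le_antisymm hle (hj.2 hi.1 hle)

/-- For `n ≥ 4` the squarefree monomial ideal
`I = (x_1,x_2) ∩ (x_3,…,x_n)` in `K[x_1,…,x_n]` is not pretty clean; in
particular for `n = 4` the ideal `(x_1x_3, x_1x_4, x_2x_3, x_2x_4)` is not
pretty clean, hence not clean. -/
theorem not_prettyClean_intersection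
    {K : Type*} [Field K] (n : ℕ) (hn : 4 ≤ n) :
    (¬ IsPrettyClean
        (Ideal.span {(X (⟨0, by omega⟩ : Fin n) : MvPolynomial (Fin n) K),
            X ⟨1, by omega⟩} ⊓
          Ideal.span ((fun i => (X i : MvPolynomial (Fin n) K)) ''
            {i : Fin n | 2 ≤ (i : ℕ)}))) ∧
    (¬ IsPrettyClean
        (Ideal.span {(X 0 * X 2 : MvPolynomial (Fin 4) K), X 0 * X 3,
          X 1 * X 2, X 1 * X 3})) ∧
    (¬ IsClean
        (Ideal.span {(X 0 * X 2 : MvPolynomial (Fin 4) K), X 0 * X 3,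
          X 1 * X 2, X 1 * X 3})) := by
  have h4 : ¬ IsPrettyClean (Ideal.span {(X 0 * X 2 : MvPolynomial (Fin 4) K), X 0 * X 3,
      X 1 * X 2, X 1 * X 3}) := by
    have hgens : ({X 0 * X 2, X 0 * X 3, X 1 * X 2, X 1 * X 3} : Set (MvPolynomial (Fin 4) K)) =
        Set.image2 (fun v w => X v * X w) {0, 1} {2, 3} := by
      ext
      simp only [Set.image2_insert_left, Set.image2_singleton_left, Set.image_insert_eq,
        Set.image_singleton, Set.mem_union, Set.mem_insert_iff, Set.mem_singleton_iff]
      tauto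
    have hdisj : Disjoint ({0, 1} : Set (Fin 4)) {2, 3} := by
      simp
    rw [hgens, ← span_X_inf_span_X hdisj]
    exact not_isPrettyClean_span_X_inf_span_X hdisj (Set.nontrivial_pair (by decide))
      (Set.nontrivial_pair (by decide))
  refine ⟨?_, h4, fun h => h4 h.isPrettyClean⟩
  rw [← Set.image_pair]
  refine not_isPrettyClean_span_X_inf_span_X ?_ (Set.nontrivial_pair (by simp))
    ⟨⟨2, by omega⟩, by simp, ⟨3, by omega⟩, by simp, by simp⟩
  simp [Set.disjoint_insert_left]
end

section
/- Let I be a monomial ideal in S = K[x_1,…,x_n] and let T = uK[Z] be a Stanley space occurring in some Stanley decomposition of S/I (u a monomial, Z ⊆ {x_1,…,x_n}). Then the K-vector subspace I_1 = I ⊕ T of S is an ideal of S if and only if I_1 = (I, u); and in this case I : u = P, where P = (x_i : x_i ∉ Z). -/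
open MvPolynomial

/-- The family of residue classes of the monomials `x^{u i}·x^v`, `supp v ⊆ Z i`,
of a candidate Stanley decomposition `S/I = ⊕ᵢ x^{u i} K[Z i]`. -/
noncomputable def stanleyFamily {K : Type*} [Field K] {n : ℕ}
    (I : Ideal (MvPolynomial (Fin n) K)) {r : ℕ}
    (u : Fin r → (Fin n →₀ ℕ)) (Z : Fin r → Finset (Fin n)) :
    (Σ i : Fin r, {v : Fin n →₀ ℕ // v.support ⊆ Z i}) →
      (MvPolynomial (Fin n) K ⧸ I) :=
  fun p => Ideal.Quotient.mk I (mono K (u p.1 + p.2.1))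

/-- `S/I = ⊕ᵢ x^{u i} K[Z i]` is a Stanley decomposition: the residue classes of
the monomials `x^{u i}·x^v` (`supp v ⊆ Z i`) form a `K`-basis of `S/I`. -/
def IsStanleyDecomposition {K : Type*} [Field K] {n : ℕ}
    (I : Ideal (MvPolynomial (Fin n) K)) {r : ℕ}
    (u : Fin r → (Fin n →₀ ℕ)) (Z : Fin r → Finset (Fin n)) : Prop :=
  LinearIndependent K (stanleyFamily I u Z) ∧
    Submodule.span K (Set.range (stanleyFamily I u Z)) = ⊤

/-- The Stanley space `x^a·K[Z]` viewed as a `K`-subspace of `S`: the `K`-span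
of the monomials `x^a·x^v` with `supp v ⊆ Z`. -/
noncomputable def stanleySubspace (K : Type*) [Field K] {n : ℕ}
    (a : Fin n →₀ ℕ) (Z : Finset (Fin n)) :
    Submodule K (MvPolynomial (Fin n) K) :=
  Submodule.span K ((fun v => mono K (a + v)) '' {v : Fin n →₀ ℕ | v.support ⊆ Z})

/-!
A monomial ideal contains a polynomial iff it contains each of its monomials. If `I ⊕ T` is an
ideal, it contains `I` and `x^a`, hence `(I, x^a)`, and the converse inclusion is clear. For the
colon ideal: if `f x^a ∈ I` then `x^{a+b} ∈ I` for every monomial `x^b` of `f`, which is impossible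
for `supp b ⊆ Z` because `x^{a+b}` is a basis vector of `S/I`; so `f ∈ P`. Conversely, for
`i ∉ Z` write `x_i x^a = f + t` with `f ∈ I`, `t ∈ T`; no monomial of `T` equals `x^{a+e_i}`,
so it is a monomial of `f`, and thus lies in `I`.
-/

theorem mono_mul {K : Type*} [Field K] {σ : Type*} (v w : σ →₀ ℕ) :
    mono K v * mono K w = mono K (v + w) := by
  simp [mono, monomial_mul]

theorem IsMonomialIdeal.mono_mem_of_mem_support {K : Type*} [Field K] {σ : Type*}
    {I : Ideal (MvPolynomial σ K)} (hI : IsMonomialIdeal I) {f : MvPolynomial σ K}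
    (hf : f ∈ I) {b : σ →₀ ℕ} (hb : b ∈ f.support) : mono K b ∈ I := by
  obtain ⟨A, rfl⟩ := hI
  obtain ⟨c, hc, hcb⟩ := mem_ideal_span_monomial_image.1 hf b hb
  refine mem_ideal_span_monomial_image.2 fun b' hb' => ⟨c, hc, ?_⟩
  rw [Finset.mem_singleton.1 (support_monomial_subset hb')]
  exact hcb

theorem IsStanleyDecomposition.mono_notMem {K : Type*} [Field K] {n : ℕ}
    {I : Ideal (MvPolynomial (Fin n) K)} {r : ℕ} {u : Fin r → (Fin n →₀ ℕ)}
    {Z : Fin r → Finset (Fin n)} (hS : IsStanleyDecomposition I u Z) (i : Fin r)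
    {v : Fin n →₀ ℕ} (hv : v.support ⊆ Z i) : mono K (u i + v) ∉ I := fun hmem =>
  hS.1.ne_zero (⟨i, ⟨v, hv⟩⟩ : Σ j : Fin r, {w : Fin n →₀ ℕ // w.support ⊆ Z j})
    (Ideal.Quotient.eq_zero_iff_mem.2 hmem)

section StanleySubspace

variable {K : Type*} [Field K] {n : ℕ}

theorem mono_mem_stanleySubspace (a : Fin n →₀ ℕ) (Z : Finset (Fin n)) :
    mono K a ∈ stanleySubspace K a Z :=
  Submodule.subset_span ⟨0, by simp, by simp⟩

theorem coeff_eq_zero_of_mem_stanleySubspace {a b : Fin n →₀ ℕ} {Z : Finset (Fin n)}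
    (hb : ∀ v : Fin n →₀ ℕ, v.support ⊆ Z → a + v ≠ b) {t : MvPolynomial (Fin n) K}
    (ht : t ∈ stanleySubspace K a Z) : coeff b t = 0 := by
  suffices stanleySubspace K a Z ≤ LinearMap.ker (lcoeff K b) from this ht
  rw [stanleySubspace, Submodule.span_le]
  rintro _ ⟨v, hv, rfl⟩
  simp [mono, coeff_monomial, hb v hv]

theorem sup_stanleySubspace_le (I : Ideal (MvPolynomial (Fin n) K)) (a : Fin n →₀ ℕ)
    (Z : Finset (Fin n)) :
    Submodule.restrictScalars K I ⊔ stanleySubspace K a Z ≤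
      Submodule.restrictScalars K (I ⊔ Ideal.span {mono K a}) := by
  refine sup_le (fun x hx => Ideal.mem_sup_left hx) ?_
  rw [stanleySubspace, Submodule.span_le]
  rintro _ ⟨v, -, rfl⟩
  exact Ideal.mem_sup_right (Ideal.mem_span_singleton.2 ⟨mono K v, (mono_mul a v).symm⟩)

theorem sup_stanleySubspace_eq_of_eq_restrictScalars {I J : Ideal (MvPolynomial (Fin n) K)}
    {a : Fin n →₀ ℕ} {Z : Finset (Fin n)}
    (hJ : Submodule.restrictScalars K I ⊔ stanleySubspace K a Z =
      Submodule.restrictScalars K J) :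
    Submodule.restrictScalars K I ⊔ stanleySubspace K a Z =
      Submodule.restrictScalars K (I ⊔ Ideal.span {mono K a}) := by
  refine le_antisymm (sup_stanleySubspace_le I a Z) ?_
  have hIJ : I ≤ J := fun x hx => by
    have : x ∈ Submodule.restrictScalars K I ⊔ stanleySubspace K a Z := Submodule.mem_sup_left hx
    rwa [hJ] at this
  have haJ : mono K a ∈ J := by
    have : mono K a ∈ Submodule.restrictScalars K I ⊔ stanleySubspace K a Z :=
      Submodule.mem_sup_right (mono_mem_stanleySubspace a Z)
    rwa [hJ] at this
  rw [hJ]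
  exact sup_le hIJ (Ideal.span_singleton_le_iff_mem _ |>.2 haJ)

end StanleySubspace

theorem IsMonomialIdeal.colon_le_span_X {K : Type*} [Field K] {σ : Type*}
    {I : Ideal (MvPolynomial σ K)} (hI : IsMonomialIdeal I) {a : σ →₀ ℕ} {Z : Finset σ}
    (hZ : ∀ v : σ →₀ ℕ, v.support ⊆ Z → mono K (a + v) ∉ I) :
    I.colon (Ideal.span {mono K a}) ≤ Ideal.span (X '' {i | i ∉ Z}) := by
  intro f hf
  rw [Ideal.mem_colon_span_singleton] at hf
  refine mem_ideal_span_X_image.2 fun b hb => ?_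
  by_contra! hbZ
  refine hZ b (fun i hi => ?_) ?_
  · by_contra hiZ
    exact Finsupp.mem_support_iff.1 hi (hbZ i hiZ)
  · have hba : b + a ∈ (f * mono K a).support := by
      rwa [mem_support_iff, mono, coeff_mul_monomial, mul_one, ← mem_support_iff]
    rw [add_comm]
    exact hI.mono_mem_of_mem_support hf hba

theorem IsMonomialIdeal.span_X_le_colon {K : Type*} [Field K] {n : ℕ}
    {I : Ideal (MvPolynomial (Fin n) K)} (hI : IsMonomialIdeal I) {a : Fin n →₀ ℕ}
    {Z : Finset (Fin n)}
    (hsup : Submodule.restrictScalars K I ⊔ stanleySubspace K a Z =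
      Submodule.restrictScalars K (I ⊔ Ideal.span {mono K a})) :
    Ideal.span (X '' {i | i ∉ Z}) ≤ I.colon (Ideal.span {mono K a}) := by
  rw [Ideal.span_le]
  rintro _ ⟨i, hi, rfl⟩
  have hXa : (X i : MvPolynomial (Fin n) K) * mono K a = mono K (a + Finsupp.single i 1) := by
    rw [show (X i : MvPolynomial (Fin n) K) = mono K (Finsupp.single i 1) from rfl, mono_mul,
      add_comm]
  rw [SetLike.mem_coe, Ideal.mem_colon_span_singleton, hXa]
  have hmem : mono K (a + Finsupp.single i 1) ∈
      Submodule.restrictScalars K I ⊔ stanleySubspace K a Z :=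
    hsup ▸ Ideal.mem_sup_right
      (Ideal.mem_span_singleton.2 ⟨mono K (Finsupp.single i 1), (mono_mul a _).symm⟩)
  obtain ⟨f, hf, t, ht, hft⟩ := Submodule.mem_sup.1 hmem
  have hct : coeff (a + Finsupp.single i 1) t = 0 := by
    refine coeff_eq_zero_of_mem_stanleySubspace (fun v hv hav => hi ?_) ht
    rw [add_left_cancel hav] at hv
    exact hv (by simp)
  have hcf : coeff (a + Finsupp.single i 1) f = 1 := by
    have := congrArg (coeff (a + Finsupp.single i 1)) hft
    rwa [coeff_add, hct, add_zero, mono, coeff_monomial, if_pos rfl] at this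
  exact hI.mono_mem_of_mem_support hf (mem_support_iff.2 (hcf ▸ one_ne_zero))

/-- Let `T = x^a·K[Z]` be a Stanley space occurring in some
Stanley decomposition of `S/I`. The `K`-subspace `I ⊕ T` of `S` is an ideal of
`S` if and only if it equals `(I, x^a)`; and in this case
`I : x^a = (x_i : x_i ∉ Z)`. -/
theorem stanley_space_sup_isIdeal_iff
    {K : Type*} [Field K] {n : ℕ} (I : Ideal (MvPolynomial (Fin n) K))
    (hI : IsMonomialIdeal I) (a : Fin n →₀ ℕ) (Z : Finset (Fin n))
    (hT : ∃ (r : ℕ) (u : Fin r → (Fin n →₀ ℕ)) (Z' : Fin r → Finset (Fin n))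
      (i : Fin r), IsStanleyDecomposition I u Z' ∧ u i = a ∧ Z' i = Z) :
    ((∃ J : Ideal (MvPolynomial (Fin n) K),
        Submodule.restrictScalars K I ⊔ stanleySubspace K a Z =
          Submodule.restrictScalars K J) ↔
      Submodule.restrictScalars K I ⊔ stanleySubspace K a Z =
        Submodule.restrictScalars K (I ⊔ Ideal.span {mono K a})) ∧
    ((∃ J : Ideal (MvPolynomial (Fin n) K),
        Submodule.restrictScalars K I ⊔ stanleySubspace K a Z =
          Submodule.restrictScalars K J) →
      I.colon (Ideal.span {mono K a}) =
        Ideal.span ((fun i => (X i : MvPolynomial (Fin n) K)) ''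
          {i : Fin n | i ∉ Z})) := by
  obtain ⟨r, u, Z', i, hS, rfl, rfl⟩ := hT
  refine ⟨⟨fun ⟨J, hJ⟩ => sup_stanleySubspace_eq_of_eq_restrictScalars hJ,
    fun h => ⟨_, h⟩⟩, fun ⟨J, hJ⟩ => le_antisymm ?_ ?_⟩
  · exact hI.colon_le_span_X fun v hv => hS.mono_notMem i hv
  · exact hI.span_X_le_colon (sup_stanleySubspace_eq_of_eq_restrictScalars hJ)
end
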